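/- arXiv:2201.05424 — 2 statements merged into one kernel-verified Lean document; each statement's English description precedes it below -/
import Mathlib

section
/- The restriction of φ_0 to the complement of the diagonal, φ_0 : (P^n × P^n) \ Δ → P(Sym^3(W)), is an isomorphism onto its image; in particular its differential is injective at every point with [λ] ≠ [μ]. -/
/-!
Cancelling `μ` gives `αμ + 2λβ = cλμ`, so `μ ∣ 2λβ`. A nonzero linear form is prime in the
polynomial ring, `2` is a unit, and `μ ∤ λ` because `[λ] ≠ [μ]`; hence `μ ∣ β`, which for linear
forms means `β = bμ`. Substituting back and cancelling `μ` once more gives `α = (c - 2b)λ`.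
-/

open MvPolynomial

namespace MvPolynomial

variable {σ k : Type*}

theorem eq_C_mul_of_dvd_of_totalDegree_le {R : Type*} [CommRing R] [IsDomain R]
    {p q : MvPolynomial σ R} (hp : p ≠ 0) (hpq : p ∣ q)
    (hdeg : q.totalDegree ≤ p.totalDegree) : ∃ a : R, q = C a * p := by
  obtain ⟨r, rfl⟩ := hpq
  rcases eq_or_ne r 0 with rfl | hr
  · exact ⟨0, by simp⟩
  rw [totalDegree_mul_of_isDomain hp hr] at hdeg
  rw [totalDegree_eq_zero_iff_eq_C.mp (by omega : r.totalDegree = 0)]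
  exact ⟨_, mul_comm _ _⟩

variable [Field k]

theorem IsHomogeneous.eq_C_mul_of_dvd {p q : MvPolynomial σ k} (hp : p.IsHomogeneous 1)
    (hq : q.IsHomogeneous 1) (hp0 : p ≠ 0) (hpq : p ∣ q) : ∃ a : k, q = C a * p :=
  eq_C_mul_of_dvd_of_totalDegree_le hp0 hpq <| by
    rw [hp.totalDegree hp0]
    exact hq.totalDegree_le

theorem IsHomogeneous.prime_of_degree_one {p : MvPolynomial σ k} (hp : p.IsHomogeneous 1)
    (hp0 : p ≠ 0) : Prime p := by
  obtain ⟨d, hd⟩ := ne_zero_iff.mp hp0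
  refine (irreducible_of_totalDegree_eq_one (hp.totalDegree hp0) fun x hx => ?_).prime
  exact isUnit_iff_ne_zero.mpr (ne_zero_of_dvd_ne_zero hd (hx d))

end MvPolynomial

theorem phi0_differential_injective_off_diagonal_general {k : Type*} [Field k]
    (hchar : ringChar k = 0 ∨ 3 < ringChar k) (n : ℕ)
    (l m α β : MvPolynomial (Fin (n + 1)) k)
    (hl : l.IsHomogeneous 1) (hm : m.IsHomogeneous 1)
    (hβ : β.IsHomogeneous 1)
    (hl0 : l ≠ 0) (hm0 : m ≠ 0)
    (hne : ∀ a : k, m ≠ C a * l)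
    (c : k) (h : α * m ^ 2 + 2 * (l * m * β) = C c * (l * m ^ 2)) :
    (∃ a : k, α = C a * l) ∧ ∃ b : k, β = C b * m := by
  have hreduced : α * m + 2 * (l * β) = C c * l * m :=
    mul_left_cancel₀ hm0 (by linear_combination h)
  have two_isUnit : IsUnit (2 : MvPolynomial (Fin (n + 1)) k) := by
    rw [← map_ofNat C 2]
    exact (Ring.two_ne_zero (by omega)).isUnit.map C
  have hdvd : m ∣ l * β := by
    rw [← two_isUnit.dvd_mul_left,
      (by linear_combination hreduced : 2 * (l * β) = m * (C c * l - α))]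
    exact dvd_mul_right _ _
  have not_dvd : ¬ m ∣ l := by
    rintro hml
    obtain ⟨a, rfl⟩ := hm.eq_C_mul_of_dvd hl hm0 hml
    have ha : a ≠ 0 := by rintro rfl; simp at hl0
    exact hne a⁻¹ (by rw [← mul_assoc, ← C_mul, inv_mul_cancel₀ ha, C_1, one_mul])
  obtain ⟨b, hb⟩ := hm.eq_C_mul_of_dvd hβ hm0
    (((hm.prime_of_degree_one hm0).dvd_or_dvd hdvd).resolve_left not_dvd)
  refine ⟨⟨c - 2 * b, mul_right_cancel₀ hm0 ?_⟩, b, hb⟩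
  rw [map_sub, map_mul, map_ofNat]
  linear_combination hreduced - 2 * l * hb

/-- The restriction of `φ₀ : ([λ],[μ]) ↦ [λμ²]` to the
complement of the diagonal is an immersion: at any point with `[λ] ≠ [μ]`, the
differential of `φ₀` is injective.  Concretely, a tangent vector at
`([λ],[μ])` is a pair of linear forms `(α, β)`, the differential sends it to
`αμ² + 2λμβ`, and this lies in the line spanned by `λμ²` (i.e. is a tangent
vector along the fibers of the projectivization) only if `α ∈ ⟨λ⟩` and
`β ∈ ⟨μ⟩`. -/
theorem phi0_differential_injective_off_diagonal {k : Type*} [Field k] [IsAlgClosed k]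
    (hchar : ringChar k = 0 ∨ 3 < ringChar k) (n : ℕ) (hn : 2 ≤ n)
    (l m α β : MvPolynomial (Fin (n + 1)) k)
    (hl : l.IsHomogeneous 1) (hm : m.IsHomogeneous 1)
    (hα : α.IsHomogeneous 1) (hβ : β.IsHomogeneous 1)
    (hl0 : l ≠ 0) (hm0 : m ≠ 0)
    (hne : ∀ a : k, m ≠ C a * l)
    (c : k) (h : α * m ^ 2 + 2 * (l * m * β) = C c * (l * m ^ 2)) :
    (∃ a : k, α = C a * l) ∧ ∃ b : k, β = C b * m :=
  phi0_differential_injective_off_diagonal_general hchar n l m α β hl hm hβ hl0 hm0 hne c h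
end

section
/- Let N_d denote the normal bundle of the d-th Veronese embedding P(W) → P(Sym^d(W)). For e ≤ d there is a natural embedding of vector bundles α_{e,d} : N_e → N_d given over a point [λ] ∈ P(W) by multiplication by λ^{d-e} on fibers; i.e., the multiplication map Sym^e(W)/⟨λ^{e-1}·W⟩ → Sym^d(W)/⟨λ^{d-1}·W⟩, q ↦ λ^{d-e} q, is a well-defined injective linear map. -/
open MvPolynomial

/-- For `1 ≤ e ≤ d`, multiplication by `λ^(d-e)` induces a
well-defined injective linear map
`Sym^e(W)/(λ^(e-1)·W) → Sym^d(W)/(λ^(d-1)·W)` on the fibers of the normal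
bundles of the Veronese embeddings at `[λ]`.  Concretely, for a homogeneous
degree-`e` polynomial `q`: `λ^(d-e)·q` lies in `λ^(d-1)·W` if and only if `q`
lies in `λ^(e-1)·W`. -/
theorem veronese_normal_bundle_embedding {k : Type*} [Field k] [CharZero k]
    (n e d : ℕ) (he : 1 ≤ e) (hed : e ≤ d)
    (lam : MvPolynomial (Fin (n + 1)) k) (hlam : lam.IsHomogeneous 1) (h0 : lam ≠ 0)
    (q : MvPolynomial (Fin (n + 1)) k) (hq : q.IsHomogeneous e) :
    (∃ l : MvPolynomial (Fin (n + 1)) k, l.IsHomogeneous 1 ∧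
        lam ^ (d - 1) * l = lam ^ (d - e) * q) ↔
      ∃ l : MvPolynomial (Fin (n + 1)) k, l.IsHomogeneous 1 ∧ q = lam ^ (e - 1) * l := by
  have hd : d - 1 = (d - e) + (e - 1) := by omega
  have hne : lam ^ (d - e) ≠ 0 := pow_ne_zero _ h0
  constructor
  · rintro ⟨l, hl, heq⟩
    refine ⟨l, hl, ?_⟩
    apply mul_left_cancel₀ hne
    rw [← heq, hd, pow_add, mul_assoc]
  · rintro ⟨l, hl, heq⟩
    refine ⟨l, hl, ?_⟩
    rw [heq, hd, pow_add, mul_assoc]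
end
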